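/- Let K be a field, let r ≥ 1 be an integer, let x₁, …, x_r ∈ K be pairwise distinct, and let t ∈ K satisfy 1 − x_i t ≠ 0 for all i. Then ∏_{i=1}^{r} (1 − x_i t)^{−1} = ∑_{i=1}^{r} x_i^{r−1} / ( ∏_{j ≠ i}(x_i − x_j) · (1 − x_i t) ). -/

import Mathlib

/-!
After multiplying by `∏ᵢ (1 - xᵢ t)`, the decomposition becomes
`∑ᵢ xᵢ^(r-1) ∏_{j ≠ i} (1 - xⱼ t) / ∏_{j ≠ i} (xᵢ - xⱼ) = 1`. This is the Lagrange interpolation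
formula `Y^(r-1) = ∑ᵢ xᵢ^(r-1) ∏_{j ≠ i} (Y - xⱼ) / (xᵢ - xⱼ)`, homogenized to degree `r - 1` and
evaluated at `(Y, Z) = (1, t)`; homogenizing avoids any case distinction at `t = 0`.
-/

open Polynomial Finset

namespace Lagrange

variable {R : Type*} [CommRing R] {ι : Type*}

theorem eval_homogenize_nodal (s : Finset ι) (v : ι → R) (x : Fin 2 → R) :
    MvPolynomial.eval x ((nodal s v).homogenize #s) = ∏ i ∈ s, (x 0 - v i * x 1) := by
  have hdeg : ∀ i ∈ s, (X - C (v i)).natDegree ≤ 1 := fun i _ => natDegree_X_sub_C_le (v i)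
  have hprod := homogenize_finsetProd hdeg
  rw [sum_const, smul_eq_mul, mul_one] at hprod
  rw [nodal, hprod, MvPolynomial.eval_prod]
  refine prod_congr rfl fun i _ => ?_
  simp

variable {F : Type*} [Field F] [DecidableEq ι] {s : Finset ι} {v : ι → F}

theorem eq_sum_eval_mul_nodalWeight_mul_nodal_erase (hvs : Set.InjOn v s) {P : F[X]}
    (hP : P.degree < #s) :
    P = ∑ i ∈ s, C (P.eval (v i) * nodalWeight s v i) * nodal (s.erase i) v := by
  conv_lhs => rw [eq_interpolate hvs hP, interpolate_apply]
  refine sum_congr rfl fun i hi => ?_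
  rw [basis_eq_prod_sub_inv_mul_nodal_div hi, ← nodal_erase_eq_nodal_div hi, ← mul_assoc, C_mul]

theorem eval_homogenize_eq_sum (hvs : Set.InjOn v s) {P : F[X]} (hP : P.degree < #s)
    (x : Fin 2 → F) :
    MvPolynomial.eval x (P.homogenize (#s - 1)) =
      ∑ i ∈ s, P.eval (v i) * nodalWeight s v i * ∏ j ∈ s.erase i, (x 0 - v j * x 1) := by
  conv_lhs => rw [eq_sum_eval_mul_nodalWeight_mul_nodal_erase hvs hP]
  rw [homogenize_finsetSum, MvPolynomial.eval_sum]
  refine sum_congr rfl fun i hi => ?_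
  rw [homogenize_C_mul, ← card_erase_of_mem hi, MvPolynomial.eval_mul, MvPolynomial.eval_C,
    eval_homogenize_nodal]

theorem sum_pow_mul_nodalWeight_mul_prod_erase (hvs : Set.InjOn v s) (hs : s.Nonempty) (t : F) :
    ∑ i ∈ s, v i ^ (#s - 1) * nodalWeight s v i * ∏ j ∈ s.erase i, (1 - v j * t) = 1 := by
  have hdeg : (X ^ (#s - 1) : F[X]).degree < #s := by
    rw [degree_X_pow]
    exact_mod_cast Nat.sub_lt hs.card_pos one_pos
  have hinterp := eval_homogenize_eq_sum hvs hdeg ![1, t]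
  rw [homogenize_X_pow le_rfl] at hinterp
  simpa using hinterp.symm

theorem prod_inv_one_sub_mul_eq_sum (hvs : Set.InjOn v s) (hs : s.Nonempty) {t : F}
    (ht : ∀ i ∈ s, 1 - v i * t ≠ 0) :
    ∏ i ∈ s, (1 - v i * t)⁻¹ =
      ∑ i ∈ s, v i ^ (#s - 1) / ((∏ j ∈ s.erase i, (v i - v j)) * (1 - v i * t)) := by
  calc ∏ i ∈ s, (1 - v i * t)⁻¹
      = (∑ i ∈ s, v i ^ (#s - 1) * nodalWeight s v i * ∏ j ∈ s.erase i, (1 - v j * t)) *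
          ∏ i ∈ s, (1 - v i * t)⁻¹ := by
        rw [sum_pow_mul_nodalWeight_mul_prod_erase hvs hs, one_mul]
    _ = _ := by
        rw [sum_mul]
        refine sum_congr rfl fun i hi => ?_
        have hne : ∏ j ∈ s.erase i, (1 - v j * t) ≠ 0 :=
          prod_ne_zero_iff.mpr fun j hj => ht j (mem_of_mem_erase hj)
        rw [prod_inv_distrib, ← mul_prod_erase s _ hi, mul_inv_rev, mul_assoc,
          mul_inv_cancel_left₀ hne, nodalWeight, prod_inv_distrib, div_mul_eq_div_div,
          div_eq_mul_inv, div_eq_mul_inv]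

end Lagrange

/-- Partial fraction decomposition of `H(t) = ∏_i (1 − x_i t)^{−1}`:
`∏_i (1 − x_i t)^{−1} = ∑_i x_i^{r−1} / (∏_{j ≠ i}(x_i − x_j) · (1 − x_i t))`. -/
theorem statement1 {K : Type*} [Field K] {r : ℕ} (hr : 1 ≤ r) (x : Fin r → K)
    (hx : Function.Injective x) (t : K) (ht : ∀ i, 1 - x i * t ≠ 0) :
    ∏ i : Fin r, (1 - x i * t)⁻¹
      = ∑ i : Fin r,
          x i ^ (r - 1) / ((∏ j ∈ Finset.univ.erase i, (x i - x j)) * (1 - x i * t)) := by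
  have hne : (univ : Finset (Fin r)).Nonempty := univ_nonempty_iff.mpr ⟨⟨0, hr⟩⟩
  simpa using Lagrange.prod_inv_one_sub_mul_eq_sum hx.injOn hne fun i _ => ht i
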